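/- The function x ↦ (2a² + x²)√(4a² - x²)/(2π) · 1_{[-2a,2a]}(x) with a = 3^{-1/4} is a probability density on ℝ. -/
import Mathlib


open Real MeasureTheory Set
set_option maxHeartbeats 1000000 in

lemma quartic_key (a : ℝ) (ha : 0 < a) :
    ∫ x in (-(2*a))..(2*a), (2 * a ^ 2 + x ^ 2) * Real.sqrt (4 * a ^ 2 - x ^ 2)
      = 6 * π * a ^ 4 := by
  have hder : ∀ x ∈ uIcc (-(π/2)) (π/2),
      HasDerivAt (fun θ => (2*a) * Real.sin θ) ((fun θ => (2*a) * Real.cos θ) x) x := by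
    intro x _
    simpa using (Real.hasDerivAt_sin x).const_mul (2*a)
  have hsub := intervalIntegral.integral_comp_mul_deriv (a := -(π/2)) (b := π/2)
    (f := fun θ => (2*a) * Real.sin θ) (f' := fun θ => (2*a) * Real.cos θ)
    (g := fun u => (2 * a ^ 2 + u ^ 2) * Real.sqrt (4 * a ^ 2 - u ^ 2))
    hder (by fun_prop) (by fun_prop)
  simp only [Function.comp] at hsub
  rw [Real.sin_neg, Real.sin_pi_div_two] at hsub
  norm_num at hsub
  rw [← hsub]
  have hcongr : (∫ θ in (-(π/2))..(π/2),
      (fun u => (2 * a ^ 2 + u ^ 2) * Real.sqrt (4 * a ^ 2 - u ^ 2)) ((2*a) * Real.sin θ)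
        * ((2*a) * Real.cos θ))
      = ∫ θ in (-(π/2))..(π/2),
        (2 * a ^ 2) * (2*a)^2 * Real.cos θ ^ 2 + (2*a)^4 * (Real.sin θ ^ 2 * Real.cos θ ^ 2) := by
    apply intervalIntegral.integral_congr
    intro θ hθ
    rw [uIcc_of_le (by linarith [Real.pi_pos] : -(π/2) ≤ π/2)] at hθ
    have hcos : 0 ≤ Real.cos θ := Real.cos_nonneg_of_mem_Icc hθ
    have h1 : 4 * a ^ 2 - ((2*a) * Real.sin θ) ^ 2 = ((2*a) * Real.cos θ)^2 := by
      have := Real.sin_sq_add_cos_sq θ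
      nlinarith
    dsimp only
    rw [h1, Real.sqrt_sq (by positivity)]
    ring
  rw [hcongr]
  have h2 : Real.sin (4 * (π/2)) = 0 := by
    rw [show 4 * (π/2) = 2*π by ring, Real.sin_two_pi]
  have h3 : Real.sin (4 * (-(π/2))) = 0 := by
    rw [show 4 * (-(π/2)) = -(2*π) by ring, Real.sin_neg, Real.sin_two_pi, neg_zero]
  rw [intervalIntegral.integral_add (by apply Continuous.intervalIntegrable; fun_prop)
      (by apply Continuous.intervalIntegrable; fun_prop),
    intervalIntegral.integral_const_mul, intervalIntegral.integral_const_mul,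
    integral_cos_sq, integral_sin_sq_mul_cos_sq, h2, h3]
  simp [Real.cos_pi_div_two]
  ring

/-- The equilibrium measure of the log-gas with quartic confinement `V(x)=x⁴/4`
has density `(2a²+x²)√(4a²-x²)/(2π)` on `[-2a,2a]`, `a = 3^{-1/4}`, which is a
probability density on ℝ. -/
theorem quartic_equilibrium_is_probability_density :
    let a : ℝ := (3 : ℝ) ^ (-(1 : ℝ) / 4)
    (∀ x : ℝ, 0 ≤ Set.indicator (Set.Icc (-(2 * a)) (2 * a))
        (fun x => (2 * a ^ 2 + x ^ 2) * Real.sqrt (4 * a ^ 2 - x ^ 2) / (2 * π)) x) ∧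
      ∫ x : ℝ, Set.indicator (Set.Icc (-(2 * a)) (2 * a))
        (fun x => (2 * a ^ 2 + x ^ 2) * Real.sqrt (4 * a ^ 2 - x ^ 2) / (2 * π)) x = 1 := by
  intro a
  have ha : 0 < a := Real.rpow_pos_of_pos (by norm_num) _
  have ha4 : a ^ 4 = 1/3 := by
    show ((3:ℝ) ^ (-(1:ℝ)/4)) ^ 4 = 1/3
    rw [← Real.rpow_natCast ((3:ℝ) ^ (-(1:ℝ)/4)) 4, ← Real.rpow_mul (by norm_num)]
    norm_num [Real.rpow_neg_one]
  constructor
  · intro x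
    apply Set.indicator_nonneg
    intro y _
    positivity
  · rw [MeasureTheory.integral_indicator measurableSet_Icc,
      MeasureTheory.integral_Icc_eq_integral_Ioc,
      ← intervalIntegral.integral_of_le (by linarith : -(2*a) ≤ 2*a)]
    have : (∫ x in (-(2*a))..(2*a),
        (2 * a ^ 2 + x ^ 2) * Real.sqrt (4 * a ^ 2 - x ^ 2) / (2 * π))
        = (∫ x in (-(2*a))..(2*a),
        (2 * a ^ 2 + x ^ 2) * Real.sqrt (4 * a ^ 2 - x ^ 2)) / (2*π) := by
      rw [intervalIntegral.integral_div]
    rw [this, quartic_key a ha, ha4]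
    have hπ : π ≠ 0 := Real.pi_ne_zero
    field_simp
    ring
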